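/- arXiv:2401.17702 — 2 statements merged into one kernel-verified Lean document; each statement's English description precedes it below -/
import Mathlib

section
/- Let V be a real inner product space, a : V × V → ℝ a symmetric bilinear form, Z_h a linear subspace of V, and λ, λ_h ∈ ℝ. Let u, u_h, w ∈ V satisfy: ⟨u,u⟩ = 1, ⟨u_h,u_h⟩ = 1, a(u,u) = λ, u_h ∈ Z_h, w ∈ Z_h, a(u_h, v) = λ_h·⟨u_h, v⟩ for every v ∈ Z_h, and a(u − w, u_h) = 0. Then λ − λ_h = a(u − u_h, u − u_h) − 2·λ_h·⟨u − w, u_h⟩ − λ_h·⟨u − u_h, u − u_h⟩. -/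
open scoped RealInnerProductSpace

/-- Abstract eigenvalue error expansion for nonconforming eigenvalue approximations. -/
theorem eigenvalue_error_expansion
    {V : Type*} [NormedAddCommGroup V] [InnerProductSpace ℝ V]
    (a : V →ₗ[ℝ] V →ₗ[ℝ] ℝ) (hsymm : ∀ x y : V, a x y = a y x)
    (Zh : Submodule ℝ V) (lam lamh : ℝ) (u uh w : V)
    (hu : ⟪u, u⟫ = 1) (huh : ⟪uh, uh⟫ = 1)
    (hauu : a u u = lam)
    (huhZ : uh ∈ Zh) (hwZ : w ∈ Zh)
    (heig : ∀ v ∈ Zh, a uh v = lamh * ⟪uh, v⟫)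
    (horth : a (u - w) uh = 0) :
    lam - lamh =
      a (u - uh) (u - uh) - 2 * lamh * ⟪u - w, uh⟫ - lamh * ⟪u - uh, u - uh⟫ := by
  have hw : a uh w = lamh * ⟪uh, w⟫ := heig w hwZ
  have huu : a uh uh = lamh := by rw [heig uh huhZ, huh]; ring
  have hau : a u uh = lamh * ⟪uh, w⟫ := by
    have h := horth
    simp only [map_sub, LinearMap.sub_apply] at h
    rw [hsymm w uh, hw] at h
    linarith
  simp only [map_sub, LinearMap.sub_apply, inner_sub_left, inner_sub_right]
  rw [hauu, huu, hsymm uh u, hau, hu, huh, real_inner_comm w uh, real_inner_comm uh u]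
  ring
end

section
/- Let p₁, p₂, p₃ ∈ ℝ² be affinely independent with barycentric coordinate functions ψ₁, ψ₂, ψ₃ (affine, ψ_i(p_j) = δ_{ij}, ψ₁ + ψ₂ + ψ₃ ≡ 1), edge midpoints m_i := (p_{i+1} + p_{i+2})/2 (indices modulo 3), and let K be the convex hull of {p₁, p₂, p₃}. Then for every affine function f : ℝ² → ℝ and every x ∈ K, |f(x)| ≤ 3·max_{1≤i≤3} |f(m_i)|. -/
/-- Elementwise `L^∞` stability of affine functions on a triangle in terms of their
edge-midpoint values: `|f(x)| ≤ 3 max_{1≤i≤3} |f(m_i)|` for `x` in the triangle. -/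
theorem affine_midpoint_linf_bound
    (p : Fin 3 → (Fin 2 → ℝ)) (hp : AffineIndependent ℝ p)
    (ψ : Fin 3 → ((Fin 2 → ℝ) →ᵃ[ℝ] ℝ))
    (hψδ : ∀ i j : Fin 3, ψ i (p j) = if i = j then 1 else 0)
    (hψsum : ∀ x : Fin 2 → ℝ, ∑ i : Fin 3, ψ i x = 1)
    (m : Fin 3 → (Fin 2 → ℝ))
    (hm : ∀ i : Fin 3, m i = midpoint ℝ (p (i + 1)) (p (i + 2)))
    (K : Set (Fin 2 → ℝ)) (hK : K = convexHull ℝ (Set.range p))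
    (f : (Fin 2 → ℝ) →ᵃ[ℝ] ℝ) (x : Fin 2 → ℝ) (hx : x ∈ K) :
    |f x| ≤ 3 * max |f (m 0)| (max |f (m 1)| |f (m 2)|) := by
  subst hK
  rw [convexHull_range_eq_exists_affineCombination] at hx
  obtain ⟨s, w, hw0, hw1, hwx⟩ := hx
  -- extend weights to univ
  set W : Fin 3 → ℝ := (s : Set (Fin 3)).indicator w with hW
  have hW0 : ∀ i, 0 ≤ W i := by
    intro i
    by_cases h : i ∈ s
    · simp [hW, Set.indicator_of_mem, h, hw0 i h]
    · simp [hW, Set.indicator_of_notMem, h]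
  have hW1 : ∑ i : Fin 3, W i = 1 := by
    simp only [hW, Set.indicator_apply, Finset.mem_coe]
    rw [Finset.sum_ite_mem, Finset.univ_inter]; exact hw1
  have hWx : Finset.univ.affineCombination ℝ p W = x := by
    rw [hW, ← Finset.affineCombination_indicator_subset w p s.subset_univ, hwx]
  have hWle : ∀ i, W i ≤ 1 := by
    intro i
    calc W i ≤ ∑ j : Fin 3, W j :=
      Finset.single_le_sum (fun j _ => hW0 j) (Finset.mem_univ i)
    _ = 1 := hW1
  -- f x = ∑ W j * f (p j)
  have hfx : f x = ∑ j : Fin 3, W j * f (p j) := by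
    rw [← hWx, Finset.map_affineCombination _ _ _ hW1,
      Finset.univ.affineCombination_eq_linear_combination _ _ hW1]
    simp [smul_eq_mul]
  -- f (m i) = (f p(i+1) + f p(i+2))/2
  have hfm : ∀ i, f (m i) = (f (p (i + 1)) + f (p (i + 2))) / 2 := by
    intro i
    rw [hm i, AffineMap.map_midpoint, midpoint_eq_smul_add]
    simp [smul_eq_mul]
    ring
  -- key identity
  have key : f x = ∑ i : Fin 3, (1 - 2 * W i) * f (m i) := by
    rw [hfx]
    have h1 : W 0 + W 1 + W 2 = 1 := by
      rw [← hW1, Fin.sum_univ_three]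
    have h0 : f (m 0) = (f (p 1) + f (p 2)) / 2 := by simpa using hfm 0
    have h2 : f (m 1) = (f (p 2) + f (p 0)) / 2 := by simpa using hfm 1
    have h3 : f (m 2) = (f (p 0) + f (p 1)) / 2 := by simpa using hfm 2
    rw [Fin.sum_univ_three, Fin.sum_univ_three, h0, h2, h3]
    linear_combination (f (p 0) + f (p 1) + f (p 2)) * h1
  set M := max |f (m 0)| (max |f (m 1)| |f (m 2)|) with hM
  have hMi : ∀ i : Fin 3, |f (m i)| ≤ M := by
    intro i
    fin_cases i
    · exact le_max_left _ _
    · exact le_trans (le_max_left _ _) (le_max_right _ _)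
    · exact le_trans (le_max_right _ _) (le_max_right _ _)
  have habs : ∀ i : Fin 3, |1 - 2 * W i| ≤ 1 := by
    intro i
    rw [abs_le]
    constructor <;> nlinarith [hW0 i, hWle i]
  have hM0 : 0 ≤ M := le_trans (abs_nonneg _) (hMi 0)
  calc |f x| = |∑ i : Fin 3, (1 - 2 * W i) * f (m i)| := by rw [key]
    _ ≤ ∑ i : Fin 3, |(1 - 2 * W i) * f (m i)| := Finset.abs_sum_le_sum_abs _ _
    _ ≤ ∑ i : Fin 3, M := by
        apply Finset.sum_le_sum
        intro i _
        rw [abs_mul]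
        calc |1 - 2 * W i| * |f (m i)| ≤ 1 * M :=
          mul_le_mul (habs i) (hMi i) (abs_nonneg _) zero_le_one
        _ = M := one_mul M
    _ = 3 * M := by rw [Fin.sum_univ_three]; ring
end
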